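/- arXiv:1812.01526 — 3 statements merged into one kernel-verified Lean document; each statement's English description precedes it below -/
import Mathlib

section
/- Let A and B be abelian categories and let F : A ⥤ B be a fully faithful functor admitting a right adjoint U. Assume that every object Y of B admits an epimorphism F X ⟶ Y from an object X of A. Then for every object Y of B the counit morphism F (U Y) ⟶ Y is an isomorphism; consequently F is an equivalence of categories. -/
open CategoryTheory

universe v₁ v₂ u₁ u₂

/-!
The counit `ε_Y : F (U Y) ⟶ Y` is epi: if `f : F X ⟶ Y` is epi, then so is
`ε_{F X} ≫ f = F (U f) ≫ ε_Y`, since `ε_{F X}` is split by `F η_X`. It is mono: two maps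
`g₁ g₂ : Z ⟶ F (U Y)` with `g₁ ≫ ε_Y = g₂ ≫ ε_Y` may be tested after an epi `p : F X ⟶ Z`, where
fullness writes `p ≫ gᵢ = F uᵢ`, and `F uᵢ ≫ ε_Y` is the adjoint transpose of `uᵢ`, so
`u₁ = u₂`. An abelian category is balanced, so `ε_Y` is an isomorphism and `F` is essentially
surjective.
-/

namespace CategoryTheory.Adjunction

variable {C D : Type*} [Category C] [Category D] {F : C ⥤ D} {U : D ⥤ C} (adj : F ⊣ U)

instance isSplitEpi_counit_app_obj (X : C) : IsSplitEpi (adj.counit.app (F.obj X)) :=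
  IsSplitEpi.mk' ⟨F.map (adj.unit.app X), adj.left_triangle_components X⟩

lemma epi_counit_app_of_epi {X : C} {Y : D} (f : F.obj X ⟶ Y) [Epi f] :
    Epi (adj.counit.app Y) :=
  have : Epi (F.map (U.map f) ≫ adj.counit.app Y) := by
    rw [← Functor.comp_map, adj.counit.naturality, Functor.id_map]
    infer_instance
  epi_of_epi (F.map (U.map f)) _

lemma mono_counit_app_of_exists_epi [F.Full] (h : ∀ Z : D, ∃ (X : C) (p : F.obj X ⟶ Z), Epi p)
    (Y : D) : Mono (adj.counit.app Y) where
  right_cancellation {Z} g₁ g₂ hg := by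
    obtain ⟨X, p, hp⟩ := h Z
    obtain ⟨u₁, hu₁⟩ := F.map_surjective (p ≫ g₁)
    obtain ⟨u₂, hu₂⟩ := F.map_surjective (p ≫ g₂)
    have hu : u₁ = u₂ := (adj.homEquiv X Y).symm.injective <| by
      simp only [homEquiv_counit, hu₁, hu₂, Category.assoc, hg]
    rw [← cancel_epi p, ← hu₁, ← hu₂, hu]

lemma isIso_counit_app_of_exists_epi [Balanced D] [F.Full]
    (h : ∀ Z : D, ∃ (X : C) (p : F.obj X ⟶ Z), Epi p) (Y : D) : IsIso (adj.counit.app Y) :=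
  have := adj.mono_counit_app_of_exists_epi h Y
  have : Epi (adj.counit.app Y) := by
    obtain ⟨X, f, _⟩ := h Y
    exact adj.epi_counit_app_of_epi f
  isIso_of_mono_of_epi _

end CategoryTheory.Adjunction

theorem counit_isIso_and_isEquivalence_of_fullyFaithful_of_epi_general
    {A : Type u₁} {B : Type u₂} [Category.{v₁} A] [Category.{v₂} B]
    [Abelian B] (F : A ⥤ B) (U : B ⥤ A) (adj : F ⊣ U)
    [F.Full] [F.Faithful]
    (h : ∀ Y : B, ∃ (X : A) (f : F.obj X ⟶ Y), Epi f) :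
    (∀ Y : B, IsIso (adj.counit.app Y)) ∧ F.IsEquivalence := by
  have hiso := adj.isIso_counit_app_of_exists_epi h
  have : F.EssSurj := ⟨fun Y => adj.mem_essImage_of_counit_isIso Y⟩
  exact ⟨hiso, { }⟩

/-- If `F : A ⥤ B` is a fully faithful functor between abelian categories admitting a right
adjoint `U`, and every object of `B` admits an epimorphism from an object of the form `F X`,
then every counit morphism `F (U Y) ⟶ Y` is an isomorphism; consequently `F` is an
equivalence of categories. -/
theorem counit_isIso_and_isEquivalence_of_fullyFaithful_of_epi
    {A : Type u₁} {B : Type u₂} [Category.{v₁} A] [Category.{v₂} B]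
    [Abelian A] [Abelian B] (F : A ⥤ B) (U : B ⥤ A) (adj : F ⊣ U)
    [F.Full] [F.Faithful]
    (h : ∀ Y : B, ∃ (X : A) (f : F.obj X ⟶ Y), Epi f) :
    (∀ Y : B, IsIso (adj.counit.app Y)) ∧ F.IsEquivalence :=
  counit_isIso_and_isEquivalence_of_fullyFaithful_of_epi_general F U adj h
end

section
/- Let R be a commutative local ring and I ⊆ R a proper ideal. If P is a bounded complex of finitely generated projective R-modules such that I • H_n(P) = H_n(P) for every integer n, then H_n(P) = 0 for every n, i.e. P is acyclic. -/
/-!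
Induct upward from the bottom of the complex, keeping the cycle module `Z_m = ker d_m` finitely
generated projective. Then `H_m`, a quotient of `Z_m`, is finitely generated, so `I • H_m = H_m`
and Nakayama give `H_m = 0`. Exactness at `m` makes `d_{m+1} : P_{m+1} → Z_m` a surjection onto a
projective module; it splits, so `Z_{m+1}` is a direct summand of `P_{m+1}`.
-/

open CategoryTheory CategoryTheory.Limits

universe u

section SplitKernel

variable {R M N : Type*} [Ring R] [AddCommGroup M] [Module R M] [AddCommGroup N] [Module R N]
  (f : M →ₗ[R] N) [Module.Projective R (LinearMap.range f)]

theorem LinearMap.exists_leftInverse_ker_subtype :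
    ∃ l : M →ₗ[R] LinearMap.ker f, l ∘ₗ (LinearMap.ker f).subtype = .id := by
  obtain ⟨s, hs⟩ := f.rangeRestrict.exists_rightInverse_of_surjective f.range_rangeRestrict
  rw [← f.ker_rangeRestrict]
  have split := (f.rangeRestrict.exact_subtype_ker_map.split_tfae').out 0 1
  exact (split.mp ⟨Subtype.val_injective, s, hs⟩).2

theorem Module.Finite.ker_of_projective_range [Module.Finite R M] :
    Module.Finite R (LinearMap.ker f) :=
  let ⟨l, hl⟩ := f.exists_leftInverse_ker_subtype
  .of_surjective l (LinearMap.surjective_of_comp_eq_id _ _ hl)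

theorem Module.Projective.ker_of_projective_range [Module.Projective R M] :
    Module.Projective R (LinearMap.ker f) :=
  let ⟨l, hl⟩ := f.exists_leftInverse_ker_subtype
  .of_split _ l hl

end SplitKernel

theorem Module.subsingleton_of_ideal_smul_top_eq_top {R M : Type*} [CommRing R] [AddCommGroup M]
    [Module R M] [Module.Finite R M] {I : Ideal R} (hI : I ≤ Ideal.jacobson ⊥)
    (h : I • (⊤ : Submodule R M) = ⊤) : Subsingleton M := by
  rw [← Submodule.subsingleton_iff R, ← subsingleton_iff_bot_eq_top]
  exact (Submodule.eq_bot_of_le_smul_of_le_jacobson_bot I ⊤ Module.Finite.fg_top h.ge hI).symm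

theorem CategoryTheory.ShortComplex.moduleCat_finite_homology {R : Type*} [Ring R]
    (S : ShortComplex (ModuleCat R)) [Module.Finite R (LinearMap.ker S.g.hom)] :
    Module.Finite R S.homology :=
  have : Module.Finite R S.moduleCatLeftHomologyData.H :=
    .of_surjective _ (Submodule.mkQ_surjective (LinearMap.range S.moduleCatToCycles))
  .equiv S.moduleCatHomologyIso.toLinearEquiv.symm

namespace ChainComplex

variable {R : Type*} [Ring R] (P : ChainComplex (ModuleCat R) ℤ)

theorem moduleCat_finite_homology (m : ℤ) [Module.Finite R (LinearMap.ker (P.d m (m - 1)).hom)] :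
    Module.Finite R (P.homology m) :=
  have : Module.Finite R (LinearMap.ker (P.sc' (m + 1) m (m - 1)).g.hom) :=
    ‹Module.Finite R (LinearMap.ker (P.d m (m - 1)).hom)›
  have := (P.sc' (m + 1) m (m - 1)).moduleCat_finite_homology
  .equiv (P.homologyIsoSc' (m + 1) m (m - 1) (by simp) (by simp)).toLinearEquiv.symm

theorem moduleCat_exactAt_iff_range_eq_ker (m : ℤ) :
    P.ExactAt m ↔ LinearMap.range (P.d (m + 1) m).hom = LinearMap.ker (P.d m (m - 1)).hom := by
  rw [P.exactAt_iff' (m + 1) m (m - 1) (by simp) (by simp)]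
  exact ShortComplex.moduleCat_exact_iff_range_eq_ker _

theorem ker_d_succ_finite_projective (m : ℤ) [Module.Finite R (P.X (m + 1))]
    [Module.Projective R (P.X (m + 1))] [Module.Projective R (LinearMap.ker (P.d m (m - 1)).hom)]
    (hm : P.ExactAt m) :
    Module.Finite R (LinearMap.ker (P.d (m + 1) (m + 1 - 1)).hom) ∧
      Module.Projective R (LinearMap.ker (P.d (m + 1) (m + 1 - 1)).hom) := by
  have : Module.Projective R (LinearMap.range (P.d (m + 1) m).hom) := by
    rwa [(P.moduleCat_exactAt_iff_range_eq_ker m).mp hm]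
  rw [add_sub_cancel_right]
  exact ⟨.ker_of_projective_range _, .ker_of_projective_range _⟩

end ChainComplex

theorem ChainComplex.exactAt_of_ideal_smul_homology_eq_top {R : Type*} [CommRing R]
    {I : Ideal R} (hI : I ≤ Ideal.jacobson ⊥) (P : ChainComplex (ModuleCat R) ℤ) (m : ℤ)
    [Module.Finite R (LinearMap.ker (P.d m (m - 1)).hom)]
    (h : I • (⊤ : Submodule R (P.homology m)) = ⊤) : P.ExactAt m := by
  have := P.moduleCat_finite_homology m
  have := Module.subsingleton_of_ideal_smul_top_eq_top hI h
  exact (P.exactAt_iff_isZero_homology m).mpr (ModuleCat.isZero_of_subsingleton _)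

/-- Let `R` be a commutative local ring and `I ⊆ R` a proper ideal. If `P` is a bounded
complex of finitely generated projective `R`-modules such that `I • H_n(P) = H_n(P)` for
every `n : ℤ`, then every homology module `H_n(P)` vanishes, i.e. `P` is acyclic. -/
theorem homology_isZero_of_smul_eq_top
    {R : Type u} [CommRing R] [IsLocalRing R] (I : Ideal R) (hI : I ≠ ⊤)
    (P : ChainComplex (ModuleCat.{u} R) ℤ)
    (hbdd : ∃ a b : ℤ, ∀ n : ℤ, (n < a ∨ b < n) → IsZero (P.X n))
    (hfg : ∀ n : ℤ, Module.Finite R (P.X n))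
    (hproj : ∀ n : ℤ, Module.Projective R (P.X n))
    (hsmul : ∀ n : ℤ, I • (⊤ : Submodule R (P.homology n)) = ⊤)
    (n : ℤ) : IsZero (P.homology n) := by
  obtain ⟨a, _, hbelow⟩ := hbdd
  have hjac : I ≤ Ideal.jacobson ⊥ := by
    rw [IsLocalRing.jacobson_eq_maximalIdeal ⊥ bot_ne_top]
    exact IsLocalRing.le_maximalIdeal hI
  have hcycles_below : ∀ m < a, Module.Finite R (LinearMap.ker (P.d m (m - 1)).hom) ∧
      Module.Projective R (LinearMap.ker (P.d m (m - 1)).hom) := fun m hm ↦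
    have := ModuleCat.subsingleton_of_isZero (hbelow m (.inl hm))
    ⟨inferInstance, inferInstance⟩
  have hcycles_above : ∀ m, a - 1 ≤ m → Module.Finite R (LinearMap.ker (P.d m (m - 1)).hom) ∧
      Module.Projective R (LinearMap.ker (P.d m (m - 1)).hom) := by
    intro m hm
    induction m, hm using Int.leInduction with
    | base => exact hcycles_below (a - 1) (by omega)
    | succ m _ ih =>
      obtain ⟨_, _⟩ := ih
      have := hfg (m + 1)
      have := hproj (m + 1)
      exact P.ker_d_succ_finite_projective m
        (P.exactAt_of_ideal_smul_homology_eq_top hjac m (hsmul m))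
  obtain ⟨_, -⟩ := (lt_or_ge n a).elim (hcycles_below n) fun _ ↦ hcycles_above n (by omega)
  exact (P.exactAt_of_ideal_smul_homology_eq_top hjac n (hsmul n)).isZero_homology
end

section
/- Let R be a ring, n an integer, and P a bounded complex of finitely generated projective R-modules such that H_j(P) = 0 for all j < n. Then H_n(P) is a finitely presented R-module. -/
open CategoryTheory CategoryTheory.Limits

universe u

/-! Write `Z_j = ker (d : P_j → P_{j-1})`. Exactness at `j - 1` makes `P_j → Z_{j-1}`
surjective, so once `Z_{j-1}` is projective, `Z_j` is a direct summand of `P_j`, hence finitely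
generated projective. Starting below the support of `P`, where `Z_j = 0`, this propagates up to
`Z_n`; then `H_n(P) = Z_n / im P_{n+1}` is a finitely presented module modulo a finitely generated
submodule. -/

section

variable {R M N : Type*} [Ring R] [AddCommGroup M] [Module R M] [AddCommGroup N] [Module R N]

theorem LinearMap.exists_retraction_ker_subtype_of_surjective [Module.Projective R N]
    (f : M →ₗ[R] N) (hf : Function.Surjective f) :
    ∃ r : M →ₗ[R] LinearMap.ker f, r ∘ₗ (LinearMap.ker f).subtype = LinearMap.id := by
  obtain ⟨s, hs⟩ := Module.projective_lifting_property f LinearMap.id hf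
  exact (((LinearMap.exact_subtype_ker_map f).split_tfae').out 0 1 rfl rfl).mp
    ⟨(LinearMap.ker f).injective_subtype, s, hs⟩ |>.2

theorem Module.Finite.ker_of_surjective [Module.Finite R M] [Module.Projective R N]
    (f : M →ₗ[R] N) (hf : Function.Surjective f) : Module.Finite R (LinearMap.ker f) :=
  have ⟨r, hr⟩ := f.exists_retraction_ker_subtype_of_surjective hf
  .of_surjective r (Function.LeftInverse.surjective (LinearMap.congr_fun hr))

theorem Module.Projective.ker_of_surjective [Module.Projective R M] [Module.Projective R N]
    (f : M →ₗ[R] N) (hf : Function.Surjective f) : Module.Projective R (LinearMap.ker f) :=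
  have ⟨r, hr⟩ := f.exists_retraction_ker_subtype_of_surjective hf
  .of_split _ r hr

end

namespace CategoryTheory.ShortComplex

variable {R : Type*} [Ring R]

theorem Exact.finite_projective_ker_f {S : ShortComplex (ModuleCat R)} (hS : S.Exact)
    [Module.Finite R S.X₁] [Module.Projective R S.X₁]
    [Module.Projective R (LinearMap.ker S.g.hom)] :
    Module.Finite R (LinearMap.ker S.f.hom) ∧ Module.Projective R (LinearMap.ker S.f.hom) := by
  have hsurj := S.exact_iff_surjective_moduleCatToCycles.mp hS
  have hker : LinearMap.ker S.moduleCatToCycles = LinearMap.ker S.f.hom :=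
    LinearMap.ker_codRestrict _ _ _
  rw [← hker]
  exact ⟨.ker_of_surjective _ hsurj, .ker_of_surjective _ hsurj⟩

theorem finitePresentation_homology (S : ShortComplex (ModuleCat R)) [Module.Finite R S.X₁]
    [Module.FinitePresentation R (LinearMap.ker S.g.hom)] :
    Module.FinitePresentation R S.homology := by
  have : Module.FinitePresentation R
      (LinearMap.ker S.g.hom ⧸ LinearMap.range S.moduleCatToCycles) :=
    Module.finitePresentation_of_surjective _ (Submodule.mkQ_surjective _)
      (by rw [Submodule.ker_mkQ]; exact Submodule.fg_range _)
  let e : (LinearMap.ker S.g.hom ⧸ LinearMap.range S.moduleCatToCycles) ≃ₗ[R] S.homology :=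
    S.moduleCatHomologyIso.symm.toLinearEquiv
  exact .of_equiv e

end CategoryTheory.ShortComplex

namespace HomologicalComplex

variable {R ι : Type*} [Ring R] {c : ComplexShape ι} (P : HomologicalComplex (ModuleCat R) c)
  {i j k : ι}

theorem finite_projective_ker_d_of_exactAt (hi : c.prev j = i) (hk : c.next j = k)
    (hj : P.ExactAt j) [Module.Finite R (P.X i)] [Module.Projective R (P.X i)]
    [Module.Projective R (LinearMap.ker (P.d j k).hom)] :
    Module.Finite R (LinearMap.ker (P.d i j).hom) ∧
      Module.Projective R (LinearMap.ker (P.d i j).hom) :=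
  have : Module.Finite R (P.sc' i j k).X₁ := ‹_›
  have : Module.Projective R (P.sc' i j k).X₁ := ‹_›
  have : Module.Projective R (LinearMap.ker (P.sc' i j k).g.hom) := ‹_›
  ((P.exactAt_iff' i j k hi hk).mp hj).finite_projective_ker_f

theorem finitePresentation_homology (hi : c.prev j = i) (hk : c.next j = k)
    [Module.Finite R (P.X i)] [Module.FinitePresentation R (LinearMap.ker (P.d j k).hom)] :
    Module.FinitePresentation R (P.homology j) :=
  have : Module.Finite R (P.sc' i j k).X₁ := ‹_›
  have : Module.FinitePresentation R (LinearMap.ker (P.sc' i j k).g.hom) := ‹_›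
  have := (P.sc' i j k).finitePresentation_homology
  .of_equiv (P.homologyIsoSc' i j k hi hk).symm.toLinearEquiv

end HomologicalComplex

namespace ChainComplex

variable {R : Type*} [Ring R] (P : ChainComplex (ModuleCat R) ℤ)

theorem finite_projective_ker_d_of_exact_below [∀ j, Module.Finite R (P.X j)]
    [∀ j, Module.Projective R (P.X j)] {a n : ℤ} (hzero : ∀ j < a, IsZero (P.X j))
    (hexact : ∀ j < n, P.ExactAt j) {j : ℤ} (hj : j ≤ n) :
    Module.Finite R (LinearMap.ker (P.d j (j - 1)).hom) ∧
      Module.Projective R (LinearMap.ker (P.d j (j - 1)).hom) := by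
  have hlow (j : ℤ) (hja : j < a) :
      Module.Finite R (LinearMap.ker (P.d j (j - 1)).hom) ∧
        Module.Projective R (LinearMap.ker (P.d j (j - 1)).hom) := by
    have := ModuleCat.isZero_iff_subsingleton.mp (hzero j hja)
    exact ⟨inferInstance, inferInstance⟩
  obtain ⟨m, hma, hmj⟩ : ∃ m < a, m ≤ j := ⟨min (a - 1) j, by omega, min_le_right _ _⟩
  induction j, hmj using Int.leInduction with
  | base => exact hlow m hma
  | succ j _ ih =>
    obtain ⟨_, _⟩ := ih (by omega)
    rw [add_sub_cancel_right]
    exact P.finite_projective_ker_d_of_exactAt (k := j - 1) (by simp) (by simp)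
      (hexact j (by omega))

end ChainComplex

/-- Let `R` be a ring, `n` an integer and `P` a bounded complex of finitely generated
projective `R`-modules such that `H_j(P) = 0` for all `j < n`. Then `H_n(P)` is a finitely
presented `R`-module. -/
theorem finitePresentation_homology_of_bounded_of_vanishing_below
    {R : Type u} [Ring R]
    (P : ChainComplex (ModuleCat.{u} R) ℤ)
    (hbdd : ∃ a b : ℤ, ∀ j : ℤ, (j < a ∨ b < j) → IsZero (P.X j))
    (hfg : ∀ j : ℤ, Module.Finite R (P.X j))
    (hproj : ∀ j : ℤ, Module.Projective R (P.X j))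
    (n : ℤ)
    (hvanish : ∀ j : ℤ, j < n → IsZero (P.homology j)) :
    Module.FinitePresentation R (P.homology n) := by
  obtain ⟨a, _, hzero⟩ := hbdd
  have hexact (j : ℤ) (hj : j < n) : P.ExactAt j :=
    (P.exactAt_iff_isZero_homology j).mpr (hvanish j hj)
  obtain ⟨_, _⟩ := P.finite_projective_ker_d_of_exact_below (fun j hj ↦ hzero j (.inl hj))
    hexact le_rfl
  have := Module.finitePresentation_of_projective R (LinearMap.ker (P.d n (n - 1)).hom)
  exact P.finitePresentation_homology (i := n + 1) (k := n - 1) (by simp) (by simp)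
end
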